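/- arXiv:1106.5049 — 2 statements merged into one kernel-verified Lean document; each statement's English description precedes it below -/
import Mathlib

section
/- Let X = diag(ζ₁·I_{k₁}, …, ζ_r·I_{k_r}) with distinct ζ_i, and let F, G be as above with blocks F_i, G_i. The stabilizer of X in GL_k(ℂ) is isomorphic to ∏_{i=1}^r GL_{k_i}(ℂ) (block-diagonal matrices), and an element (g_1,…,g_r) of this stabilizer fixes (X,Y,F,G) under the action (g·X·g⁻¹, Y, g·F, G·g⁻¹) if and only if g_i·F_i = F_i and G_i·g_i⁻¹ = G_i for all i. In particular, if rank F_i = rank G_i = k_i for all i, the stabilizer of (X,Y,F,G) in GL_k(ℂ) is trivial. -/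
/-!
Conjugation by `g` fixes the diagonal matrix `X` iff `g` commutes with `X`; as the `ζ i` are
distinct, the commutant of `X` is the algebra of block-diagonal matrices, and for those both
invertibility and the action on `F` and `G` are computed block by block. A block `gᵢ` with
`gᵢ Fᵢ = Fᵢ` is the identity because `(gᵢ - 1) Fᵢ = 0` and `Fᵢ` has full row rank, so by
rank–nullity `gᵢ - 1` has rank zero.
-/

open Matrix

namespace Matrix

theorem eq_one_of_mul_eq_self_of_rank_eq_card {K m n : Type*} [Field K] [Fintype m] [DecidableEq m]
    [Fintype n] {A : Matrix m n K} (hA : A.rank = Fintype.card m) {M : Matrix m m K}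
    (hM : M * A = A) : M = 1 := by
  have hrank : (M - 1).rank = 0 := by
    have := rank_add_rank_le_card_of_mul_eq_zero (A := M - 1) (B := A) (by
      rw [Matrix.sub_mul, Matrix.one_mul, hM, sub_self])
    omega
  rw [rank, Submodule.finrank_eq_zero, LinearMap.range_eq_bot] at hrank
  exact sub_eq_zero.mp (Matrix.toLin'.map_eq_zero_iff.mp hrank)

variable {ι : Type*} {κ : ι → Type*} [Fintype ι] [DecidableEq ι] [∀ i, Fintype (κ i)] {R : Type*}

section Semiring

variable [CommSemiring R] {n : Type*}

theorem blockDiagonal'_mul_apply (M : ∀ i, Matrix (κ i) (κ i) R) (N : Matrix (Σ i, κ i) n R)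
    (i : ι) (a : κ i) (c : n) :
    (blockDiagonal' M * N) ⟨i, a⟩ c = (M i * of fun q c => N ⟨i, q⟩ c) a c := by
  simp [mul_apply, blockDiagonal'_apply, Fintype.sum_sigma]

theorem mul_blockDiagonal'_apply (M : ∀ i, Matrix (κ i) (κ i) R) (N : Matrix n (Σ i, κ i) R)
    (c : n) (i : ι) (b : κ i) :
    (N * blockDiagonal' M) c ⟨i, b⟩ = ((of fun c q => N c ⟨i, q⟩) * M i) c b := by
  simp [mul_apply, blockDiagonal'_apply, Fintype.sum_sigma]

theorem blockDiagonal'_mul_eq_self_iff (M : ∀ i, Matrix (κ i) (κ i) R)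
    (N : Matrix (Σ i, κ i) n R) :
    blockDiagonal' M * N = N ↔
      ∀ i, M i * (of fun q c => N ⟨i, q⟩ c) = of fun q c => N ⟨i, q⟩ c := by
  simp only [← ext_iff, Sigma.forall, blockDiagonal'_mul_apply, of_apply]

theorem mul_blockDiagonal'_eq_self_iff (M : ∀ i, Matrix (κ i) (κ i) R)
    (N : Matrix n (Σ i, κ i) R) :
    N * blockDiagonal' M = N ↔
      ∀ i, (of fun c q => N c ⟨i, q⟩) * M i = of fun c q => N c ⟨i, q⟩ := by
  simp only [← ext_iff, Sigma.forall, mul_blockDiagonal'_apply, of_apply]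
  exact ⟨fun h i c b => h c i b, fun h c i b => h i c b⟩

variable [∀ i, DecidableEq (κ i)]

theorem commute_blockDiagonal'_diagonal (M : ∀ i, Matrix (κ i) (κ i) R) (ζ : ι → R) :
    Commute (blockDiagonal' M) (diagonal fun p => ζ p.1) := by
  rw [← blockDiagonal'_diagonal fun i _ => ζ i, commute_iff_eq, ← blockDiagonal'_mul,
    ← blockDiagonal'_mul]
  congr 1
  funext i
  exact (scalar_commute (ζ i) (Commute.all _) (M i)).symm.eq

end Semiring

section CommRing

variable [CommRing R] [∀ i, DecidableEq (κ i)]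

theorem isUnit_blockDiagonal'_iff {M : ∀ i, Matrix (κ i) (κ i) R} :
    IsUnit (blockDiagonal' M) ↔ ∀ i, IsUnit (M i) := by
  refine ⟨fun h i => ?_, fun h => (Pi.isUnit_iff.mpr h).map (blockDiagonal'RingHom κ R)⟩
  have hinv := mul_nonsing_inv _ ((isUnit_iff_isUnit_det _).mp h)
  refine IsUnit.of_mul_eq_one (blockDiag' (blockDiagonal' M)⁻¹ i) (ext fun a b => ?_)
  have hentry := congrFun (congrFun hinv ⟨i, a⟩) ⟨i, b⟩
  rw [blockDiagonal'_mul_apply] at hentry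
  simpa [mul_apply, one_apply, blockDiag'_apply] using hentry

theorem inv_blockDiagonal' {M : ∀ i, Matrix (κ i) (κ i) R} (hM : ∀ i, IsUnit (M i)) :
    (blockDiagonal' M)⁻¹ = blockDiagonal' fun i => (M i)⁻¹ := by
  refine inv_eq_right_inv ?_
  rw [← blockDiagonal'_mul, ← blockDiagonal'_one]
  congr 1
  funext i
  exact mul_nonsing_inv _ ((isUnit_iff_isUnit_det _).mp (hM i))

theorem commute_diagonal_iff_exists_blockDiagonal' [IsDomain R] {ζ : ι → R}
    (hζ : Function.Injective ζ) {g : Matrix (Σ i, κ i) (Σ i, κ i) R} :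
    Commute g (diagonal fun p => ζ p.1) ↔ ∃ M, g = blockDiagonal' M := by
  refine ⟨fun h => ⟨blockDiag' g, ?_⟩, ?_⟩
  · ext ⟨i, a⟩ ⟨j, b⟩
    rcases eq_or_ne i j with rfl | hij
    · rw [blockDiagonal'_apply_eq, blockDiag'_apply]
    rw [blockDiagonal'_apply_ne _ _ _ hij]
    have hentry := congrFun (congrFun h.eq ⟨i, a⟩) ⟨j, b⟩
    rw [mul_diagonal, diagonal_mul, mul_comm, ← sub_eq_zero, ← sub_mul] at hentry
    exact (mul_eq_zero.mp hentry).resolve_left (sub_ne_zero.mpr (hζ.ne hij.symm))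
  · rintro ⟨M, rfl⟩
    exact commute_blockDiagonal'_diagonal M ζ

end CommRing

end Matrix

/-- For `X = diag(ζ₁ I_{k₁}, …, ζ_r I_{k_r})` with distinct `ζ_i`:
the stabilizer of `X` in `GL_k(ℂ)` consists of the block-diagonal matrices
`(g₁,…,g_r) ∈ ∏ GL_{k_i}(ℂ)`; such a block-diagonal matrix fixes `(X,Y,F,G)` iff
`gᵢ Fᵢ = Fᵢ` and `Gᵢ gᵢ⁻¹ = Gᵢ` for all `i`; and if `rank Fᵢ = rank Gᵢ = kᵢ` for
all `i`, then the stabilizer of `(X,Y,F,G)` in `GL_k(ℂ)` is trivial. -/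
theorem stmt5 (r l : ℕ) (k : Fin r → ℕ) (ζ : Fin r → ℂ) (hζ : Function.Injective ζ)
    (F : Matrix ((i : Fin r) × Fin (k i)) (Fin l) ℂ)
    (G : Matrix (Fin l) ((i : Fin r) × Fin (k i)) ℂ) :
    (∀ g : Matrix ((i : Fin r) × Fin (k i)) ((i : Fin r) × Fin (k i)) ℂ, IsUnit g →
        (g * Matrix.diagonal (fun p => ζ p.1) * g⁻¹ = Matrix.diagonal (fun p => ζ p.1) ↔
          ∃ gfam : (i : Fin r) → Matrix (Fin (k i)) (Fin (k i)) ℂ,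
            (∀ i, IsUnit (gfam i)) ∧ g = Matrix.blockDiagonal' gfam)) ∧
    (∀ gfam : (i : Fin r) → Matrix (Fin (k i)) (Fin (k i)) ℂ, (∀ i, IsUnit (gfam i)) →
        ((Matrix.blockDiagonal' gfam * F = F ∧ G * (Matrix.blockDiagonal' gfam)⁻¹ = G) ↔
          ∀ i, gfam i * (Matrix.of fun q c => F ⟨i, q⟩ c : Matrix (Fin (k i)) (Fin l) ℂ) =
                (Matrix.of fun q c => F ⟨i, q⟩ c : Matrix (Fin (k i)) (Fin l) ℂ) ∧
              (Matrix.of fun c q => G c ⟨i, q⟩ : Matrix (Fin l) (Fin (k i)) ℂ) * (gfam i)⁻¹ =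
                (Matrix.of fun c q => G c ⟨i, q⟩ : Matrix (Fin l) (Fin (k i)) ℂ))) ∧
    ((∀ i, (Matrix.of fun q c => F ⟨i, q⟩ c : Matrix (Fin (k i)) (Fin l) ℂ).rank = k i) →
      (∀ i, (Matrix.of fun c q => G c ⟨i, q⟩ : Matrix (Fin l) (Fin (k i)) ℂ).rank = k i) →
      ∀ g : Matrix ((i : Fin r) × Fin (k i)) ((i : Fin r) × Fin (k i)) ℂ, IsUnit g →
        g * Matrix.diagonal (fun p => ζ p.1) * g⁻¹ = Matrix.diagonal (fun p => ζ p.1) →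
        g * F = F → G * g⁻¹ = G → g = 1) := by
  have stabilizer_X : ∀ g : Matrix ((i : Fin r) × Fin (k i)) ((i : Fin r) × Fin (k i)) ℂ,
      IsUnit g → (g * diagonal (fun p => ζ p.1) * g⁻¹ = diagonal (fun p => ζ p.1) ↔
        ∃ gfam : (i : Fin r) → Matrix (Fin (k i)) (Fin (k i)) ℂ,
          (∀ i, IsUnit (gfam i)) ∧ g = blockDiagonal' gfam) := by
    intro g hg
    obtain ⟨_⟩ := hg.nonempty_invertible
    rw [mul_inv_eq_iff_eq_mul_of_invertible, ← commute_iff_eq,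
      commute_diagonal_iff_exists_blockDiagonal' hζ]
    constructor
    · rintro ⟨gfam, rfl⟩
      exact ⟨gfam, isUnit_blockDiagonal'_iff.mp hg, rfl⟩
    · rintro ⟨gfam, -, rfl⟩
      exact ⟨gfam, rfl⟩
  have fixes_F_G : ∀ gfam : (i : Fin r) → Matrix (Fin (k i)) (Fin (k i)) ℂ,
      (∀ i, IsUnit (gfam i)) → ((blockDiagonal' gfam * F = F ∧ G * (blockDiagonal' gfam)⁻¹ = G) ↔
        ∀ i, gfam i * (of fun q c => F ⟨i, q⟩ c) = (of fun q c => F ⟨i, q⟩ c) ∧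
          (of fun c q => G c ⟨i, q⟩) * (gfam i)⁻¹ = (of fun c q => G c ⟨i, q⟩)) := by
    intro gfam hgfam
    rw [inv_blockDiagonal' hgfam, blockDiagonal'_mul_eq_self_iff, mul_blockDiagonal'_eq_self_iff,
      forall_and]
  refine ⟨stabilizer_X, fixes_F_G, fun hF _ g hg hX hgF hgG => ?_⟩
  obtain ⟨gfam, hgfam, rfl⟩ := (stabilizer_X g hg).mp hX
  have hblocks := (fixes_F_G gfam hgfam).mp ⟨hgF, hgG⟩
  have hone : gfam = 1 := funext fun i =>
    eq_one_of_mul_eq_self_of_rank_eq_card ((hF i).trans (Fintype.card_fin _).symm) (hblocks i).1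
  rw [hone, blockDiagonal'_one]
end

section
/- Let X = diag(ζ₁·I_{k₁}, …, ζ_r·I_{k_r}) with distinct ζ_i, and suppose F_i·G_i has eigenvalues α_{i,1}, …, α_{i,k_i} (with multiplicity). Then in the local coordinate η̃ = 1/η near η = ∞, working modulo η̃², det M(ζ, 1/η̃) · η̃^l · (−1)^l ≡ ∏_{i=1}^r det((ζ_i − ζ)·I_{k_i} + η̃·F_i·G_i) (mod η̃²-corrections of the stated form); in particular the first-order neighbourhood of the spectral curve at (ζ_i, ∞) is given by the branches ζ − ζ_i = α_{i,j}·η̃ for j = 1,…,k_i. -/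
/-!
Modulo `η̃²` one computes in a commutative ring where `ε = η̃` squares to zero. There the block
`εY - 1` is invertible with inverse `-(1 + εY)`, so the Schur complement gives
`det M = det (εY - 1) · det (X - ζ + ε F G)`, while `(-1)^l det (εY - 1) = 1 - ε tr Y`.
A matrix `diagonal d + ε T` has determinant `∏ (dᵢ + ε Tᵢᵢ)`, because every other permutation
picks up two off-diagonal factors; applied both to `X - ζ + ε F G` and to each block
`(ζᵢ - ζ) + ε FᵢGᵢ`, this matches the two sides.

The splitting of a block into the branches `(ζᵢ - ζ) + η̃ α_{i,j}` is the homogenised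
characteristic polynomial: `det (s + tA) = (-t)^k χ_A(-s/t)` for `t ≠ 0` over a field, and the
identity passes from points to bivariate polynomials since `ℂ` is infinite.
-/

open Matrix Polynomial

universe u

section SquareZero

variable {S : Type*} [CommRing S] {ε : S} {n m : Type*} [Fintype n] [DecidableEq n]
  [Fintype m] [DecidableEq m]

theorem det_diagonal_add_smul_of_mul_self_eq_zero (hε : ε * ε = 0) (d : n → S)
    (T : Matrix n n S) : (diagonal d + ε • T).det = ∏ i, (d i + ε * T i i) := by
  rw [det_apply', Finset.sum_eq_single (1 : Equiv.Perm n) ?_ (by simp)]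
  · simp
  intro σ _ hσ
  obtain ⟨i, hi⟩ : ∃ i, σ i ≠ i := not_forall.mp fun h => hσ (Equiv.ext h)
  have hσi : σ (σ i) ≠ σ i := fun h => hi (σ.injective h)
  have off_diag : ∀ {a b}, a ≠ b → (diagonal d + ε • T) a b = ε * T a b := fun h => by
    simp [diagonal_apply_ne _ h]
  rw [← Finset.mul_prod_erase _ _ (Finset.mem_univ i),
    ← Finset.mul_prod_erase _ _ (Finset.mem_erase.mpr ⟨hi, Finset.mem_univ (σ i)⟩),
    off_diag hi, off_diag hσi]
  refine mul_eq_zero_of_right _ ?_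
  linear_combination (T (σ i) i * T (σ (σ i)) (σ i) *
    ∏ x ∈ (Finset.univ.erase i).erase (σ i), (diagonal d + ε • T) (σ x) x) * hε

theorem det_smul_one_add_smul_of_mul_self_eq_zero (hε : ε * ε = 0) (s : S)
    (T : Matrix n n S) : (s • (1 : Matrix n n S) + ε • T).det = ∏ i, (s + ε * T i i) := by
  rw [smul_one_eq_diagonal, det_diagonal_add_smul_of_mul_self_eq_zero hε]

theorem neg_one_pow_mul_det_smul_sub_one_of_mul_self_eq_zero (hε : ε * ε = 0)
    (Y : Matrix n n S) : (-1) ^ Fintype.card n * (ε • Y - 1).det = 1 - ε * Y.trace := by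
  rw [← det_neg, neg_sub, sub_eq_add_neg, ← neg_smul, det_one_add_smul, neg_sq, sq, hε]
  ring

theorem det_fromBlocks_smul_sub_one_of_mul_self_eq_zero (hε : ε * ε = 0) (A : Matrix m m S)
    (F : Matrix m n S) (G : Matrix n m S) (Y : Matrix n n S) :
    (fromBlocks A (ε • F) G (ε • Y - 1)).det = (ε • Y - 1).det * (A + ε • (F * G)).det := by
  have hinv : (ε • Y - 1) * -(ε • Y + 1) = 1 := by
    simp only [Matrix.mul_neg, Matrix.sub_mul, Matrix.mul_add, smul_mul_smul, hε, zero_smul]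
    noncomm_ring
  let := invertibleOfRightInverse _ _ hinv
  rw [det_fromBlocks₂₂, invOf_eq_right_inv hinv]
  congr 2
  simp only [Matrix.mul_neg, Matrix.neg_mul, Matrix.mul_add, Matrix.mul_smul,
    Matrix.smul_mul, smul_smul, hε, zero_smul, Matrix.mul_one, zero_add, sub_neg_eq_add]

theorem neg_one_pow_mul_det_fromBlocks_of_mul_self_eq_zero (hε : ε * ε = 0) (A : Matrix m m S)
    (F : Matrix m n S) (G : Matrix n m S) (Y : Matrix n n S) :
    (-1) ^ Fintype.card n * (fromBlocks A (ε • F) G (ε • Y - 1)).det =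
      (1 - ε * Y.trace) * (A + ε • (F * G)).det := by
  rw [det_fromBlocks_smul_sub_one_of_mul_self_eq_zero hε, ← mul_assoc,
    neg_one_pow_mul_det_smul_sub_one_of_mul_self_eq_zero hε]

end SquareZero

section Charpoly

variable {K : Type*} [Field K] {n : Type*} [Fintype n] [DecidableEq n]

theorem det_smul_one_add_smul_of_charpoly_eq_prod {A : Matrix n n K} {α : n → K}
    (hA : A.charpoly = ∏ j, (X - C (α j))) (s t : K) :
    (s • (1 : Matrix n n K) + t • A).det = ∏ j, (s + t * α j) := by
  rcases eq_or_ne t 0 with rfl | ht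
  · simp
  have hfactor : s • (1 : Matrix n n K) + t • A = (-t) • (scalar n (-s / t) - A) := by
    ext i j
    rcases eq_or_ne i j with rfl | h
    · simp [field]
      ring
    · simp [h]
  rw [hfactor, det_smul, ← eval_charpoly, hA, eval_prod, ← Finset.card_univ, ← Finset.prod_const,
    ← Finset.prod_mul_distrib]
  refine Finset.prod_congr rfl fun j _ => ?_
  simp only [eval_sub, eval_X, eval_C]
  field_simp
  ring

theorem det_smul_one_add_smul_map_of_charpoly_eq_prod [Infinite K] {A : Matrix n n K}
    {α : n → K} (hA : A.charpoly = ∏ j, (X - C (α j))) (s t : K[X][X]) :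
    (s • (1 : Matrix n n K[X][X]) + t • A.map (fun a => C (C a))).det =
      ∏ j, (s + t * C (C (α j))) := by
  refine Polynomial.funext fun q => Polynomial.funext fun w => ?_
  let φ : K[X][X] →+* K := (evalRingHom w).comp (evalRingHom q)
  have hmap : (s • (1 : Matrix n n K[X][X]) + t • A.map (fun a => C (C a))).map φ =
      φ s • 1 + φ t • A := by
    ext i j
    rcases eq_or_ne i j with rfl | h <;> simp [*, φ]
  change φ _ = φ _
  rw [RingHom.map_det, RingHom.mapMatrix_apply, hmap, det_smul_one_add_smul_of_charpoly_eq_prod hA,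
    map_prod]
  simp [φ]

end Charpoly

theorem exists_eq_add_sq_mul_of_forall_mul_self_eq_zero {R : Type u} [CommRing R] {a b x : R}
    (h : ∀ (S : Type u) [CommRing S] (f : R →+* S), f x * f x = 0 → f a = f b) :
    ∃ c, a = b + x ^ 2 * c := by
  have hx : Ideal.Quotient.mk (Ideal.span {x ^ 2}) x * Ideal.Quotient.mk _ x = 0 := by
    rw [← map_mul, ← sq, Ideal.Quotient.eq_zero_iff_mem]
    exact Ideal.mem_span_singleton_self _
  obtain ⟨c, hc⟩ := Ideal.mem_span_singleton'.mp (Ideal.Quotient.eq.mp (h _ _ hx))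
  exact ⟨c, by linear_combination -hc⟩

theorem stmt9_general (r l : ℕ) (k : Fin r → ℕ) (ζ : Fin r → ℂ)
    (Y : Matrix (Fin l) (Fin l) ℂ)
    (F : Matrix ((i : Fin r) × Fin (k i)) (Fin l) ℂ)
    (G : Matrix (Fin l) ((i : Fin r) × Fin (k i)) ℂ)
    (α : (i : Fin r) → Fin (k i) → ℂ)
    (hα : ∀ i, ((Matrix.of fun q c => F ⟨i, q⟩ c : Matrix (Fin (k i)) (Fin l) ℂ) *
        (Matrix.of fun c q => G c ⟨i, q⟩ : Matrix (Fin l) (Fin (k i)) ℂ)).charpoly =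
        ∏ j : Fin (k i), ((Polynomial.X : Polynomial ℂ) - C (α i j))) :
    (∀ i, ((C (C (ζ i)) - C (Polynomial.X : Polynomial ℂ)) •
          (1 : Matrix (Fin (k i)) (Fin (k i)) (Polynomial (Polynomial ℂ))) +
        (Polynomial.X : Polynomial (Polynomial ℂ)) •
          (((Matrix.of fun q c => F ⟨i, q⟩ c : Matrix (Fin (k i)) (Fin l) ℂ) *
            (Matrix.of fun c q => G c ⟨i, q⟩ : Matrix (Fin l) (Fin (k i)) ℂ)).map
              (fun a => C (C a)))).det =
        ∏ j : Fin (k i),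
          ((C (C (ζ i)) - C (Polynomial.X : Polynomial ℂ)) +
            (Polynomial.X : Polynomial (Polynomial ℂ)) * C (C (α i j)))) ∧
    ∃ c : Polynomial (Polynomial ℂ),
      (-1 : Polynomial (Polynomial ℂ)) ^ l *
          (Matrix.fromBlocks
            ((Matrix.diagonal (fun p => ζ p.1) :
                Matrix ((i : Fin r) × Fin (k i)) ((i : Fin r) × Fin (k i)) ℂ).map
                  (fun a => C (C a)) - (C (Polynomial.X : Polynomial ℂ)) • 1)
            ((Polynomial.X : Polynomial (Polynomial ℂ)) • F.map (fun a => C (C a)))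
            (G.map (fun a => C (C a)))
            ((Polynomial.X : Polynomial (Polynomial ℂ)) • Y.map (fun a => C (C a)) - 1)).det =
        (1 - (Polynomial.X : Polynomial (Polynomial ℂ)) * C (C Y.trace)) *
          (∏ i : Fin r,
            ((C (C (ζ i)) - C (Polynomial.X : Polynomial ℂ)) •
                (1 : Matrix (Fin (k i)) (Fin (k i)) (Polynomial (Polynomial ℂ))) +
              (Polynomial.X : Polynomial (Polynomial ℂ)) •
                (((Matrix.of fun q c => F ⟨i, q⟩ c : Matrix (Fin (k i)) (Fin l) ℂ) *
                  (Matrix.of fun c q => G c ⟨i, q⟩ : Matrix (Fin l) (Fin (k i)) ℂ)).map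
                    (fun a => C (C a)))).det) +
          (Polynomial.X : Polynomial (Polynomial ℂ)) ^ 2 * c := by
  refine ⟨fun i => det_smul_one_add_smul_map_of_charpoly_eq_prod (hα i) _ _, ?_⟩
  refine exists_eq_add_sq_mul_of_forall_mul_self_eq_zero fun S _ f hε => ?_
  simp only [map_mul, map_pow, map_neg, map_one, map_prod, f.map_det, RingHom.mapMatrix_apply,
    fromBlocks_map]
  have hmap_smul {m n : Type} (r : ℂ[X][X]) (A : Matrix m n ℂ[X][X]) :
      (r • A).map f = f r • A.map f := Matrix.map_smulₛₗ _ _ _ (fun a => map_mul f r a) A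
  let φ : ℂ →+* S := f.comp (C.comp C)
  have hmap_map {m n : Type} (A : Matrix m n ℂ) : (A.map fun a => C (C a)).map f = A.map φ := rfl
  have hdiag : (diagonal fun p => ζ p.1).map φ - f (C X) • 1 =
      diagonal fun p : (i : Fin r) × Fin (k i) => f (C (C (ζ p.1)) - C X) := by
    ext p q
    rcases eq_or_ne p q with rfl | h <;> simp [*, φ, one_apply]
  simp only [Matrix.map_sub _ (map_sub f), Matrix.map_add _ (map_add f), hmap_smul, hmap_map,
    Matrix.map_one _ (map_zero f) (map_one f)]
  calc _ = (1 - f X * (Y.map φ).trace) *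
          ∏ p : (i : Fin r) × Fin (k i), (f (C (C (ζ p.1)) - C X) + f X * φ ((F * G) p p)) := by
        rw [show (-1 : S) ^ l = (-1) ^ Fintype.card (Fin l) by rw [Fintype.card_fin],
          neg_one_pow_mul_det_fromBlocks_of_mul_self_eq_zero hε, hdiag,
          ← Matrix.map_mul, det_diagonal_add_smul_of_mul_self_eq_zero hε]
        rfl
    _ = _ := by
      simp only [det_smul_one_add_smul_of_mul_self_eq_zero hε, map_sub, map_one, map_mul,
        AddMonoidHom.map_trace, Fintype.prod_sigma, Matrix.map_apply]
      rfl

/-- Local analysis at `η = ∞`: in the coordinate `η̃ = 1/η` (the outer polynomial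
variable below; the inner variable is `ζ`), with `X = diag(ζ₁ I_{k₁},…,ζ_r I_{k_r})`
with distinct `ζᵢ` and `FᵢGᵢ` having eigenvalues `α_{i,1},…,α_{i,k_i}`:
each factor `det((ζᵢ−ζ)I + η̃ FᵢGᵢ)` splits into the branches `(ζᵢ−ζ) + η̃ α_{i,j}`,
and `(−1)^l η̃^l det M(ζ,1/η̃)` agrees modulo `η̃²` with
`(1 − η̃ tr Y) ∏ᵢ det((ζᵢ−ζ)I + η̃ FᵢGᵢ)`. -/
theorem stmt9 (r l : ℕ) (k : Fin r → ℕ) (ζ : Fin r → ℂ) (hζ : Function.Injective ζ)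
    (Y : Matrix (Fin l) (Fin l) ℂ)
    (F : Matrix ((i : Fin r) × Fin (k i)) (Fin l) ℂ)
    (G : Matrix (Fin l) ((i : Fin r) × Fin (k i)) ℂ)
    (α : (i : Fin r) → Fin (k i) → ℂ)
    (hα : ∀ i, ((Matrix.of fun q c => F ⟨i, q⟩ c : Matrix (Fin (k i)) (Fin l) ℂ) *
        (Matrix.of fun c q => G c ⟨i, q⟩ : Matrix (Fin l) (Fin (k i)) ℂ)).charpoly =
        ∏ j : Fin (k i), ((Polynomial.X : Polynomial ℂ) - C (α i j))) :
    (∀ i, ((C (C (ζ i)) - C (Polynomial.X : Polynomial ℂ)) •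
          (1 : Matrix (Fin (k i)) (Fin (k i)) (Polynomial (Polynomial ℂ))) +
        (Polynomial.X : Polynomial (Polynomial ℂ)) •
          (((Matrix.of fun q c => F ⟨i, q⟩ c : Matrix (Fin (k i)) (Fin l) ℂ) *
            (Matrix.of fun c q => G c ⟨i, q⟩ : Matrix (Fin l) (Fin (k i)) ℂ)).map
              (fun a => C (C a)))).det =
        ∏ j : Fin (k i),
          ((C (C (ζ i)) - C (Polynomial.X : Polynomial ℂ)) +
            (Polynomial.X : Polynomial (Polynomial ℂ)) * C (C (α i j)))) ∧
    ∃ c : Polynomial (Polynomial ℂ),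
      (-1 : Polynomial (Polynomial ℂ)) ^ l *
          (Matrix.fromBlocks
            ((Matrix.diagonal (fun p => ζ p.1) :
                Matrix ((i : Fin r) × Fin (k i)) ((i : Fin r) × Fin (k i)) ℂ).map
                  (fun a => C (C a)) - (C (Polynomial.X : Polynomial ℂ)) • 1)
            ((Polynomial.X : Polynomial (Polynomial ℂ)) • F.map (fun a => C (C a)))
            (G.map (fun a => C (C a)))
            ((Polynomial.X : Polynomial (Polynomial ℂ)) • Y.map (fun a => C (C a)) - 1)).det =
        (1 - (Polynomial.X : Polynomial (Polynomial ℂ)) * C (C Y.trace)) *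
          (∏ i : Fin r,
            ((C (C (ζ i)) - C (Polynomial.X : Polynomial ℂ)) •
                (1 : Matrix (Fin (k i)) (Fin (k i)) (Polynomial (Polynomial ℂ))) +
              (Polynomial.X : Polynomial (Polynomial ℂ)) •
                (((Matrix.of fun q c => F ⟨i, q⟩ c : Matrix (Fin (k i)) (Fin l) ℂ) *
                  (Matrix.of fun c q => G c ⟨i, q⟩ : Matrix (Fin l) (Fin (k i)) ℂ)).map
                    (fun a => C (C a)))).det) +
          (Polynomial.X : Polynomial (Polynomial ℂ)) ^ 2 * c :=
  stmt9_general r l k ζ Y F G α hα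
end
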